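/- arXiv:2511.10548 — 2 statements merged into one kernel-verified Lean document; each statement's English description precedes it below -/
import Mathlib

section
/- Let a_1 < a_2 < ... < a_p be positive integers and e_1, ..., e_p be positive integers, and let se_{m,k} = \sum_{t=m}^{k} e_t. The Young diagram Y(a;e) is wide if and only if the following two families of inequalities hold: (i) a_k \ge \sum_{i=1}^{k} e_i for every k with 1 \le k \le p; and (ii) for all 1 \le j < k \le p and every i with 2 \le i \le k such that se_{i,k} < a_j \le se_{i-1,k}, one has \sum_{t=i}^{k} e_t a_t + (a_j - se_{i,k}) a_{i-1} \ge \sum_{t=1}^{j-1} a_t e_t + a_j \sum_{t=j}^{k} e_t. -/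
/-- The multiset of row lengths of the Young diagram `Y(a;e)`:
`e i` rows of length `a i` for `i = 1, ..., p`. -/
def rowMultiset (p : ℕ) (a e : ℕ → ℕ) : Multiset ℕ :=
  ∑ i ∈ Finset.Icc 1 p, Multiset.replicate (e i) (a i)

/-- The sum of the `w` largest elements of the multiset `S`
(the sum of all of `S` if `S` has at most `w` elements). -/
def topSum (S : Multiset ℕ) (w : ℕ) : ℕ :=
  ((Multiset.sort S (· ≤ ·)).reverse.take w).sum

/-- The sum of the lengths of the leftmost `w` columns of the Young diagram
whose multiset of row lengths is `S`. -/
def colSum (S : Multiset ℕ) (w : ℕ) : ℕ :=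
  ∑ c ∈ Finset.Icc 1 w, (S.filter (fun r => c ≤ r)).card

/-- A Young diagram with multiset of row lengths `R` is wide if every subdiagram formed
by a subset of the rows dominates its conjugate. -/
def Wide (R : Multiset ℕ) : Prop :=
  ∀ S : Multiset ℕ, S ≤ R → ∀ w : ℕ, 0 < w → colSum S w ≤ topSum S w

/-- A Young diagram with multiset of row lengths `R` is Latin if, listing its row lengths
as `l 1, ..., l m`, there is a filling `f` of its cells such that row `i` is filled by a
permutation of `1, ..., l i` and the entries in each column are pairwise distinct. -/
def IsLatin (R : Multiset ℕ) : Prop :=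
  ∃ (m : ℕ) (l : ℕ → ℕ) (f : ℕ → ℕ → ℕ),
    (Finset.Icc 1 m).val.map l = R ∧
    (∀ i ∈ Finset.Icc 1 m,
      Set.InjOn (f i) (Set.Icc 1 (l i)) ∧
      (Finset.Icc 1 (l i)).image (f i) = Finset.Icc 1 (l i)) ∧
    (∀ j, 1 ≤ j → ∀ i₁ ∈ Finset.Icc 1 m, ∀ i₂ ∈ Finset.Icc 1 m,
      j ≤ l i₁ → j ≤ l i₂ → f i₁ j = f i₂ j → i₁ = i₂)

/-- An allocation for the Young diagram `Y(a;e)` with `p` row blocks (where `a 0 = 0`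
and `b i = a i - a (i-1)`). -/
def HasAllocation (p : ℕ) (a e : ℕ → ℕ) : Prop :=
  ∃ z : ℕ → ℕ → ℕ → ℕ,
    (∀ i j, 1 ≤ j → j ≤ i → i ≤ p →
      ∑ k ∈ Finset.Icc 1 i, z i j k = e i * (a j - a (j - 1))) ∧
    (∀ i k, 1 ≤ k → k ≤ i → i ≤ p →
      ∑ j ∈ Finset.Icc 1 i, z i j k = e i * (a k - a (k - 1))) ∧
    (∀ j k, 1 ≤ j → j ≤ p → 1 ≤ k → k ≤ p →
      ∑ i ∈ Finset.Icc (max j k) p, z i j k ≤ (a j - a (j - 1)) * (a k - a (k - 1)))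

/-- `sc a e j k`: the sum of the lengths of the leftmost `a j` columns of the tail
subdiagram `Y_k`. -/
def sc (a e : ℕ → ℕ) (j k : ℕ) : ℕ :=
  ∑ i ∈ Finset.Icc 1 k, e i * min (a i) (a j)

/-- `sr a e j k`: the sum of the lengths of the top `a j` rows of the tail
subdiagram `Y_k`. -/
def sr (a e : ℕ → ℕ) (j k : ℕ) : ℕ :=
  topSum (rowMultiset k a e) (a j)

/-- `se e m k = ∑_{t=m}^{k} e t`. -/
def se (e : ℕ → ℕ) (m k : ℕ) : ℕ :=
  ∑ t ∈ Finset.Icc m k, e t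

/-!
Column by column, `topSum S w = ∑_c min (h_c) w` with `h_c` the height of column `c`, and adding
a row of length `y` raises `topSum S w` by `y - min y r`, where `r` is the length of the `w`-th
longest row. So adding a row of length at most `r + w` cannot repair a failure of
`colSum ≤ topSum`, and neither can removing a row longer than `r + w`. Given `S ≤ Y(a;e)` whose
longest row lies in block `k`, either every row of the first `k` blocks missing from `S` has
length at most `r + w`, and the inequality for the subdiagram `Y_k` of the first `k` blocks passes
to `S`, or the longest row of `S` exceeds `r + w` and can be dropped. For `Y_k` the inequality
only has to be checked at the row lengths `w = a_m`, where the `a_m` longest rows of `Y_k` are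
explicit: they are the blocks after the block `i - 1` containing the `a_m`-th longest row, topped
up with rows of length `a_{i-1}`. This gives (ii), and the case `w = 1` gives (i).
-/

open Finset

def colHeight (S : Multiset ℕ) (c : ℕ) : ℕ :=
  (S.filter (fun r => c ≤ r)).card

section Columns

variable {S T : Multiset ℕ}

lemma colHeight_add (S T : Multiset ℕ) (c : ℕ) :
    colHeight (S + T) c = colHeight S c + colHeight T c := by
  simp [colHeight, Multiset.filter_add]

lemma colHeight_cons (y : ℕ) (S : Multiset ℕ) (c : ℕ) :
    colHeight (y ::ₘ S) c = colHeight S c + if c ≤ y then 1 else 0 := by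
  simp only [colHeight, Multiset.filter_cons]
  split_ifs <;> simp [add_comm]

lemma colHeight_le_card (S : Multiset ℕ) (c : ℕ) : colHeight S c ≤ Multiset.card S :=
  Multiset.card_le_card (Multiset.filter_le _ _)

lemma colHeight_antitone (S : Multiset ℕ) : Antitone (colHeight S) := fun _ _ h =>
  Multiset.card_le_card (Multiset.monotone_filter_right _ fun _ hr => h.trans hr)

lemma colHeight_mono (h : S ≤ T) (c : ℕ) : colHeight S c ≤ colHeight T c :=
  Multiset.card_le_card (Multiset.filter_le_filter _ h)

lemma colHeight_eq_zero {c : ℕ} (h : ∀ r ∈ S, r < c) : colHeight S c = 0 := by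
  simpa [colHeight, Multiset.filter_eq_nil] using h

lemma colHeight_eq_card {c : ℕ} (h : ∀ r ∈ S, c ≤ r) : colHeight S c = Multiset.card S := by
  rw [colHeight, Multiset.filter_eq_self.2 h]

lemma colHeight_eq_of_forall_mem {c c' : ℕ} (h : ∀ r ∈ S, c ≤ r ↔ c' ≤ r) :
    colHeight S c = colHeight S c' := by
  rw [colHeight, colHeight, Multiset.filter_congr h]

lemma sum_Icc_ite_le (y B : ℕ) : ∑ c ∈ Icc 1 B, (if c ≤ y then 1 else 0) = min y B := by
  rw [sum_boole, Nat.cast_id, show (Icc 1 B).filter (· ≤ y) = Icc 1 (min y B) by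
    ext c; simp only [mem_filter, mem_Icc]; omega, Nat.card_Icc]
  omega

lemma colSum_eq_sum_colHeight (S : Multiset ℕ) (w : ℕ) :
    colSum S w = ∑ c ∈ Icc 1 w, colHeight S c := rfl

lemma colSum_zero (w : ℕ) : colSum 0 w = 0 := by simp [colSum]

lemma colSum_cons (y : ℕ) (S : Multiset ℕ) (w : ℕ) :
    colSum (y ::ₘ S) w = colSum S w + min y w := by
  simp only [colSum_eq_sum_colHeight, colHeight_cons, sum_add_distrib, sum_Icc_ite_le]

lemma colSum_eq_sum_map (S : Multiset ℕ) (w : ℕ) : colSum S w = (S.map (min · w)).sum := by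
  induction S using Multiset.induction with
  | empty => exact colSum_zero w
  | cons y S ih => rw [colSum_cons, ih, Multiset.map_cons, Multiset.sum_cons, add_comm]

lemma colSum_add (S T : Multiset ℕ) (w : ℕ) : colSum (S + T) w = colSum S w + colSum T w := by
  simp only [colSum_eq_sum_map, Multiset.map_add, Multiset.sum_add]

lemma colSum_replicate (n x w : ℕ) : colSum (Multiset.replicate n x) w = n * min x w := by
  simp [colSum_eq_sum_map, Multiset.map_replicate]

lemma colSum_le_sum (S : Multiset ℕ) (w : ℕ) : colSum S w ≤ S.sum := by
  rw [colSum_eq_sum_map]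
  simpa using Multiset.sum_map_le_sum_map _ id fun r _ => min_le_left r w

lemma colSum_le_card_mul (S : Multiset ℕ) (w : ℕ) : colSum S w ≤ Multiset.card S * w := by
  rw [colSum_eq_sum_map]
  simpa using Multiset.sum_map_le_sum_map _ (fun _ => w) fun r _ => min_le_right r w

lemma colSum_eq_sum {B : ℕ} (hB : ∀ r ∈ S, r ≤ B) : colSum S B = S.sum := by
  rw [colSum_eq_sum_map, Multiset.map_congr rfl fun r hr => min_eq_left (hB r hr),
    Multiset.map_id']

lemma colSum_add_sum_Ioc (S : Multiset ℕ) {u w : ℕ} (h : u ≤ w) :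
    colSum S u + ∑ c ∈ Ioc u w, colHeight S c = colSum S w := by
  rw [colSum_eq_sum_colHeight, colSum_eq_sum_colHeight, ← zero_add 1, Icc_add_one_left_eq_Ioc]
  exact sum_Ioc_consecutive _ (Nat.zero_le u) h

end Columns

section TopSum

variable {S T : Multiset ℕ}

lemma sum_take_eq_sum_min_colHeight {l : List ℕ} (hl : l.Pairwise (· ≥ ·)) {B : ℕ}
    (hB : ∀ r ∈ l, r ≤ B) (w : ℕ) :
    (l.take w).sum = ∑ c ∈ Icc 1 B, min (colHeight l c) w := by
  induction l generalizing w with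
  | nil => simp [colHeight]
  | cons x l ih =>
    rw [List.pairwise_cons] at hl
    have hxB := hB x List.mem_cons_self
    cases w with
    | zero => simp
    | succ w =>
      have hcol : ∀ c, min (colHeight (x :: l : List ℕ) c) (w + 1) =
          min (colHeight l c) w + if c ≤ x then 1 else 0 := by
        intro c
        rw [← Multiset.cons_coe, colHeight_cons]
        split_ifs with hcx
        · omega
        · rw [colHeight_eq_zero fun r hr => (hl.1 r hr).trans_lt (not_le.1 hcx)]
          simp
      rw [List.take_succ_cons, List.sum_cons,
        ih hl.2 (fun r hr => hB r (List.mem_cons_of_mem _ hr)), sum_congr rfl fun c _ => hcol c,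
        sum_add_distrib, sum_Icc_ite_le, min_eq_left hxB, add_comm]

lemma topSum_eq_sum_min {B : ℕ} (hB : ∀ r ∈ S, r ≤ B) (w : ℕ) :
    topSum S w = ∑ c ∈ Icc 1 B, min (colHeight S c) w := by
  have hS : ((S.sort (· ≤ ·)).reverse : Multiset ℕ) = S := by
    rw [Multiset.coe_reverse, Multiset.sort_eq]
  rw [topSum, sum_take_eq_sum_min_colHeight _ (fun r hr => hB r (by simpa using hr)), hS]
  exact List.pairwise_reverse.2 (Multiset.pairwise_sort S _)

lemma topSum_of_card_le {w : ℕ} (h : Multiset.card S ≤ w) : topSum S w = S.sum := by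
  rw [topSum_eq_sum_min (fun _ hr => Multiset.le_sum_of_mem hr) w]
  conv_rhs => rw [← colSum_eq_sum fun _ hr => Multiset.le_sum_of_mem hr]
  exact sum_congr rfl fun c _ => min_eq_left ((colHeight_le_card S c).trans h)

lemma colSum_le_topSum_of_card_le {w : ℕ} (h : Multiset.card S ≤ w) :
    colSum S w ≤ topSum S w :=
  topSum_of_card_le h ▸ colSum_le_sum S w

lemma sum_le_topSum {w : ℕ} (hTS : T ≤ S) (hT : Multiset.card T ≤ w) :
    T.sum ≤ topSum S w := by
  rw [topSum_eq_sum_min (fun _ hr => Multiset.le_sum_of_mem hr) w,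
    ← colSum_eq_sum fun _ hr => Multiset.le_sum_of_mem (Multiset.mem_of_le hTS hr)]
  exact sum_le_sum fun c _ => le_min (colHeight_mono hTS c) ((colHeight_le_card T c).trans hT)

lemma topSum_add_le {A B : Multiset ℕ} {x : ℕ} (hA : ∀ r ∈ A, x ≤ r)
    (hB : ∀ r ∈ B, r ≤ x) (w : ℕ) :
    topSum (A + B) w ≤ A.sum + (w - Multiset.card A) * x := by
  have hM : ∀ r ∈ A + B, r ≤ x + A.sum := by
    intro r hr
    rcases Multiset.mem_add.1 hr with hr | hr
    · exact (Multiset.le_sum_of_mem hr).trans (Nat.le_add_left _ _)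
    · exact (hB r hr).trans (Nat.le_add_right _ _)
  have hcol : ∀ c, min (colHeight (A + B) c) w ≤
      colHeight A c + (w - Multiset.card A) * if c ≤ x then 1 else 0 := by
    intro c
    rw [colHeight_add]
    split_ifs with hcx
    · rw [colHeight_eq_card fun r hr => hcx.trans (hA r hr)]
      omega
    · rw [colHeight_eq_zero fun r hr => (hB r hr).trans_lt (not_le.1 hcx)]
      omega
  calc topSum (A + B) w
      ≤ ∑ c ∈ Icc 1 (x + A.sum),
          (colHeight A c + (w - Multiset.card A) * if c ≤ x then 1 else 0) := by
        rw [topSum_eq_sum_min hM]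
        exact sum_le_sum fun c _ => hcol c
    _ = A.sum + (w - Multiset.card A) * x := by
        rw [sum_add_distrib, ← colSum_eq_sum_colHeight,
          colSum_eq_sum fun r hr => (Multiset.le_sum_of_mem hr).trans (Nat.le_add_left _ _),
          ← mul_sum, sum_Icc_ite_le, min_eq_left (Nat.le_add_right _ _)]

end TopSum

/-- For `w ≥ 1`, the length of the `w`-th longest row of `S` (zero if `S` has fewer than `w`
rows), read off the conjugate diagram as the number of columns of height at least `w`. -/
def rowLength (S : Multiset ℕ) (w : ℕ) : ℕ :=
  #{c ∈ Icc 1 S.sum | w ≤ colHeight S c}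

section RowLength

variable {S T : Multiset ℕ}

lemma le_rowLength_iff {w c : ℕ} (hw : 1 ≤ w) (hc : 1 ≤ c) :
    c ≤ rowLength S w ↔ w ≤ colHeight S c := by
  constructor
  · intro h
    by_contra! hlt
    have hsub : {c' ∈ Icc 1 S.sum | w ≤ colHeight S c'} ⊆ Icc 1 (c - 1) := by
      intro c' hc'
      simp only [mem_filter, mem_Icc] at hc' ⊢
      by_contra! hcc'
      have := colHeight_antitone S (show c ≤ c' by omega)
      omega
    have := card_le_card hsub
    rw [Nat.card_Icc] at this
    exact absurd h (by unfold rowLength; omega)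
  · intro h
    have hsub : Icc 1 c ⊆ {c' ∈ Icc 1 S.sum | w ≤ colHeight S c'} := by
      intro c' hc'
      simp only [mem_Icc] at hc'
      have hw' : w ≤ colHeight S c' := h.trans (colHeight_antitone S hc'.2)
      obtain ⟨r, hr⟩ := Multiset.card_pos_iff_exists_mem.1 (show 0 < colHeight S c' by omega)
      have hc'r : c' ≤ r := (Multiset.mem_filter.1 hr).2
      simp only [mem_filter, mem_Icc]
      exact ⟨⟨hc'.1, hc'r.trans (Multiset.le_sum_of_mem (Multiset.mem_of_mem_filter hr))⟩,
        hw'⟩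
    simpa [rowLength] using card_le_card hsub

lemma rowLength_antitone (S : Multiset ℕ) : Antitone (rowLength S) := fun _ _ h =>
  card_le_card (monotone_filter_right _ fun _ _ hc => h.trans hc)

lemma rowLength_mono (h : S ≤ T) (w : ℕ) : rowLength S w ≤ rowLength T w := by
  obtain ⟨U, rfl⟩ := Multiset.le_iff_exists_add.1 h
  refine card_le_card fun c hc => ?_
  simp only [mem_filter, mem_Icc, Multiset.sum_add] at hc ⊢
  exact ⟨⟨hc.1.1, by omega⟩, hc.2.trans (colHeight_mono h c)⟩

lemma topSum_succ (S : Multiset ℕ) (w : ℕ) :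
    topSum S (w + 1) = topSum S w + rowLength S (w + 1) := by
  have hB : ∀ r ∈ S, r ≤ S.sum := fun _ hr => Multiset.le_sum_of_mem hr
  have hmin : ∀ c, min (colHeight S c) (w + 1) =
      min (colHeight S c) w + if w + 1 ≤ colHeight S c then 1 else 0 := by
    intro c; split_ifs <;> omega
  rw [topSum_eq_sum_min hB, topSum_eq_sum_min hB, sum_congr rfl fun c _ => hmin c,
    sum_add_distrib, sum_boole, Nat.cast_id, rowLength]

lemma topSum_add_sum_Ioc (S : Multiset ℕ) {u w : ℕ} (h : u ≤ w) :
    topSum S u + ∑ c ∈ Ioc u w, rowLength S c = topSum S w := by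
  induction w, h using Nat.le_induction with
  | base => simp
  | succ w hw ih => rw [sum_Ioc_succ_top hw, ← add_assoc, ih, topSum_succ]

lemma topSum_cons (y : ℕ) (S : Multiset ℕ) {w : ℕ} (hw : 1 ≤ w) :
    topSum (y ::ₘ S) w + min y (rowLength S w) = topSum S w + y := by
  set B := y + S.sum
  have hB : ∀ r ∈ S, r ≤ B := fun _ hr =>
    (Multiset.le_sum_of_mem hr).trans (Nat.le_add_left _ _)
  have hB' : ∀ r ∈ y ::ₘ S, r ≤ B := by
    intro r hr
    rcases Multiset.mem_cons.1 hr with rfl | hr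
    exacts [Nat.le_add_right _ _, hB r hr]
  have hmin : ∀ c, min (colHeight (y ::ₘ S) c) w =
      min (colHeight S c) w + if c ≤ y ∧ colHeight S c < w then 1 else 0 := by
    intro c
    rw [colHeight_cons]
    split_ifs <;> omega
  have hcount : #{c ∈ Icc 1 B | c ≤ y ∧ colHeight S c < w} = y - rowLength S w := by
    rw [← Nat.card_Ioc]
    congr 1
    ext c
    simp only [mem_filter, mem_Icc, mem_Ioc]
    constructor
    · rintro ⟨⟨hc, -⟩, hcy, hlt⟩
      exact ⟨not_le.1 fun h => (not_le.2 hlt) ((le_rowLength_iff hw hc).1 h), hcy⟩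
    · rintro ⟨hlt, hcy⟩
      have hc : 1 ≤ c := by omega
      exact ⟨⟨hc, by omega⟩, hcy,
        not_le.1 fun h => (not_le.2 hlt) ((le_rowLength_iff hw hc).2 h)⟩
  rw [topSum_eq_sum_min hB', topSum_eq_sum_min hB, sum_congr rfl fun c _ => hmin c,
    sum_add_distrib, sum_boole, Nat.cast_id, hcount]
  omega

end RowLength

section Reduction

variable {S : Multiset ℕ} {w : ℕ}

lemma colSum_le_topSum_of_cons {y : ℕ} (hw : 1 ≤ w) (hy : y ≤ rowLength S w + w)
    (h : colSum (y ::ₘ S) w ≤ topSum (y ::ₘ S) w) : colSum S w ≤ topSum S w := by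
  have := topSum_cons y S hw
  rw [colSum_cons] at h
  omega

lemma colSum_le_topSum_of_add {A : Multiset ℕ} (hw : 1 ≤ w)
    (hA : ∀ y ∈ A, y ≤ rowLength S w + w) (h : colSum (S + A) w ≤ topSum (S + A) w) :
    colSum S w ≤ topSum S w := by
  induction A using Multiset.induction with
  | empty => simpa using h
  | cons y A ih =>
    refine ih (fun z hz => hA z (Multiset.mem_cons_of_mem hz))
      (colSum_le_topSum_of_cons (y := y) hw ?_ ?_)
    · exact (hA y (Multiset.mem_cons_self y A)).trans
        (Nat.add_le_add_right (rowLength_mono (Multiset.le_add_right S A) w) w)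
    · rwa [← Multiset.add_cons]

lemma colSum_le_topSum_cons {y : ℕ} (hw : 1 ≤ w) (hy : rowLength (y ::ₘ S) w + w ≤ y)
    (h : colSum S w ≤ topSum S w) : colSum (y ::ₘ S) w ≤ topSum (y ::ₘ S) w := by
  have := topSum_cons y S hw
  have := rowLength_mono (Multiset.le_cons_self S y) w
  rw [colSum_cons]
  omega

theorem wide_of_forall_filter_le {R : Multiset ℕ}
    (h : ∀ x ∈ R, ∀ w, 0 < w →
      colSum (R.filter (· ≤ x)) w ≤ topSum (R.filter (· ≤ x)) w) :
    Wide R := by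
  intro S hS w hw
  induction S using Multiset.strongInductionOn with
  | ih S ih =>
  rcases eq_or_ne S 0 with rfl | hS0
  · simp [colSum_zero]
  obtain ⟨M, hMS, hM⟩ := Multiset.exists_max_image id hS0
  have hSY : S ≤ R.filter (· ≤ M) := Multiset.le_filter.2 ⟨hS, hM⟩
  obtain ⟨A, hA⟩ := Multiset.le_iff_exists_add.1 hSY
  by_cases hshort : ∀ y ∈ A, y ≤ rowLength S w + w
  · exact colSum_le_topSum_of_add hw hshort (hA ▸ h M (Multiset.mem_of_le hS hMS) w hw)
  -- some missing row is so long that the longest row `M` of `S` can be removed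
  push Not at hshort
  obtain ⟨y, hyA, hy⟩ := hshort
  have hyM : y ≤ M := by
    have : y ∈ R.filter (· ≤ M) := hA ▸ Multiset.mem_add.2 (Or.inr hyA)
    exact (Multiset.mem_filter.1 this).2
  rw [← Multiset.cons_erase hMS] at hy ⊢
  exact colSum_le_topSum_cons hw (by omega)
    (ih _ (Multiset.erase_lt.2 hMS) ((Multiset.erase_le M S).trans hS))

lemma colSum_le_topSum_of_colHeight_le {u : ℕ} (huw : u ≤ w)
    (h : ∀ c ∈ Ioc u w, colHeight S c ≤ rowLength S w) (hu : colSum S u ≤ topSum S u) :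
    colSum S w ≤ topSum S w := by
  have := sum_le_sum fun c hc => (h c hc).trans (rowLength_antitone S (mem_Ioc.1 hc).2)
  rw [← colSum_add_sum_Ioc S huw, ← topSum_add_sum_Ioc S huw]
  omega

lemma colSum_le_topSum_of_rowLength_le {v : ℕ} (hwv : w ≤ v)
    (h : ∀ c ∈ Ioc w v, rowLength S c ≤ colHeight S c) (hv : colSum S v ≤ topSum S v) :
    colSum S w ≤ topSum S w := by
  have := sum_le_sum h
  rw [← colSum_add_sum_Ioc S hwv, ← topSum_add_sum_Ioc S hwv] at hv
  omega

/-- Between consecutive row lengths the column heights are constant while `rowLength` decreases,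
so `w ↦ topSum S w - colSum S w` is concave there. -/
theorem colSum_le_topSum_of_forall_mem (h : ∀ x ∈ S, colSum S x ≤ topSum S x) (w : ℕ) :
    colSum S w ≤ topSum S w := by
  set u := Nat.findGreatest (· ∈ S) w
  have hu : colSum S u ≤ topSum S u := by
    rcases Nat.eq_zero_or_pos u with hu0 | hu0
    · rw [hu0]; simp [colSum]
    · exact h u (Nat.findGreatest_of_ne_zero rfl hu0.ne')
  have hgap : ∀ r ∈ S, u < r → w < r := fun r hr hur =>
    not_le.1 fun hrw => Nat.findGreatest_is_greatest hur hrw hr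
  by_cases hlow : colHeight S (w + 1) ≤ rowLength S w
  · refine colSum_le_topSum_of_colHeight_le (Nat.findGreatest_le w) (fun c hc => ?_) hu
    rw [mem_Ioc] at hc
    rw [colHeight_eq_of_forall_mem fun r hr => ⟨fun hcr => hgap r hr (by omega), by omega⟩]
    exact hlow
  · have hex : ∃ v, w < v ∧ v ∈ S := by
      obtain ⟨r, hr⟩ :=
        Multiset.card_pos_iff_exists_mem.1 (show 0 < colHeight S (w + 1) by omega)
      exact ⟨r, (Multiset.mem_filter.1 hr).2, Multiset.mem_of_mem_filter hr⟩
    have hv := Nat.find_spec hex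
    refine colSum_le_topSum_of_rowLength_le hv.1.le (fun c hc => ?_) (h _ hv.2)
    rw [mem_Ioc] at hc
    rw [← colHeight_eq_of_forall_mem (c := w + 1) fun r hr =>
      ⟨fun hwr => not_lt.1 fun hrc => Nat.find_min hex (by omega) ⟨hwr, hr⟩, by omega⟩]
    exact (rowLength_antitone S hc.1.le).trans (by omega)

end Reduction

def blocks (I : Finset ℕ) (a e : ℕ → ℕ) : Multiset ℕ :=
  ∑ t ∈ I, Multiset.replicate (e t) (a t)

section Blocks

variable {I J : Finset ℕ} {a e : ℕ → ℕ}

lemma rowMultiset_eq_blocks (p : ℕ) (a e : ℕ → ℕ) :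
    rowMultiset p a e = blocks (Icc 1 p) a e :=
  rfl

lemma mem_blocks {r : ℕ} : r ∈ blocks I a e ↔ ∃ t ∈ I, e t ≠ 0 ∧ a t = r := by
  simp [blocks, Multiset.mem_sum, Multiset.mem_replicate, eq_comm]

lemma card_blocks : Multiset.card (blocks I a e) = ∑ t ∈ I, e t := by
  simp [blocks, Multiset.card_sum]

lemma sum_blocks : (blocks I a e).sum = ∑ t ∈ I, e t * a t := by
  simp [blocks, Multiset.sum_sum]

lemma colSum_blocks (w : ℕ) : colSum (blocks I a e) w = ∑ t ∈ I, e t * min (a t) w := by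
  induction I using Finset.cons_induction with
  | empty => exact colSum_zero w
  | cons t I ht ih => rw [blocks, sum_cons, colSum_add, colSum_replicate, ← blocks, ih, sum_cons]

lemma blocks_mono (h : I ⊆ J) : blocks I a e ≤ blocks J a e :=
  sum_le_sum_of_subset h

lemma replicate_le_rowMultiset {n t k : ℕ} (ht : 1 ≤ t) (htk : t ≤ k) (hn : n ≤ e t) :
    Multiset.replicate n (a t) ≤ rowMultiset k a e :=
  ((Multiset.replicate_le_replicate _).2 hn).trans
    (single_le_sum (f := fun t => Multiset.replicate (e t) (a t)) (fun _ _ => Multiset.zero_le _)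
      (mem_Icc.2 ⟨ht, htk⟩))

lemma rowMultiset_eq_add {i k : ℕ} (hi : 1 ≤ i) (hik : i ≤ k + 1) :
    rowMultiset k a e = rowMultiset (i - 1) a e + blocks (Icc i k) a e := by
  rw [rowMultiset, rowMultiset, blocks, ← sum_union]
  · congr 1; ext t; simp only [mem_union, mem_Icc]; omega
  · rw [disjoint_left]; intro t; simp only [mem_Icc]; omega

lemma se_eq_add {i k : ℕ} (h : i ≤ k) : se e i k = e i + se e (i + 1) k := by
  rw [se, se, Icc_eq_cons_Ioc h, sum_cons, Icc_add_one_left_eq_Ioc]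

end Blocks

section Diagram

variable {p : ℕ} {a e : ℕ → ℕ} (ha : StrictMonoOn a (Set.Icc 1 p))
include ha

lemma mem_blocks_Icc_bounds {i k r : ℕ} (hi : 1 ≤ i) (hkp : k ≤ p)
    (hr : r ∈ blocks (Icc i k) a e) : a i ≤ r ∧ r ≤ a k := by
  obtain ⟨t, ht, -, rfl⟩ := mem_blocks.1 hr
  rw [mem_Icc] at ht
  exact ⟨ha.monotoneOn ⟨hi, by omega⟩ ⟨by omega, by omega⟩ ht.1,
    ha.monotoneOn ⟨by omega, by omega⟩ ⟨by omega, hkp⟩ ht.2⟩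

lemma filter_rowMultiset_le {k : ℕ} (hk : 1 ≤ k) (hkp : k ≤ p) :
    (rowMultiset p a e).filter (· ≤ a k) = rowMultiset k a e := by
  rw [rowMultiset_eq_add (i := k + 1) (by omega) (by omega), Nat.add_sub_cancel,
    Multiset.filter_add, Multiset.filter_eq_self.2, Multiset.filter_eq_nil.2, add_zero]
  · intro r hr
    by_cases hkp' : k + 1 ≤ p
    · exact not_le.2 ((ha ⟨hk, hkp⟩ ⟨by omega, hkp'⟩ (lt_add_one k)).trans_le
        (mem_blocks_Icc_bounds ha (by omega) le_rfl hr).1)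
    · simp [Icc_eq_empty_of_lt (not_le.1 hkp'), blocks] at hr
  · exact fun r hr => (mem_blocks_Icc_bounds ha le_rfl hkp hr).2

lemma colSum_rowMultiset_apply {j k : ℕ} (hj : 1 ≤ j) (hjk : j ≤ k) (hkp : k ≤ p) :
    colSum (rowMultiset k a e) (a j) =
      ∑ t ∈ Icc 1 (j - 1), a t * e t + a j * ∑ t ∈ Icc j k, e t := by
  rw [rowMultiset_eq_add hj (by omega), colSum_add, rowMultiset_eq_blocks, colSum_blocks,
    colSum_blocks, mul_sum]
  congr 1 <;> refine sum_congr rfl fun t ht => ?_ <;> rw [mem_Icc] at ht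
  · rw [min_eq_left (ha.monotoneOn ⟨ht.1, by omega⟩ ⟨hj, by omega⟩ (by omega)), mul_comm]
  · rw [min_eq_right (ha.monotoneOn ⟨hj, by omega⟩ ⟨by omega, by omega⟩ ht.1), mul_comm]

lemma sum_le_of_wide (hW : Wide (rowMultiset p a e)) (ha1 : 0 < a 1) {k : ℕ} (hkp : k ≤ p) :
    ∑ t ∈ Icc 1 k, e t ≤ a k := by
  have hcol : colSum (rowMultiset k a e) 1 = ∑ t ∈ Icc 1 k, e t := by
    rw [rowMultiset_eq_blocks, colSum_blocks]
    refine sum_congr rfl fun t ht => ?_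
    rw [mem_Icc] at ht
    have hat : 1 ≤ a t :=
      ha1.trans_le (ha.monotoneOn ⟨le_rfl, by omega⟩ ⟨ht.1, by omega⟩ ht.1)
    rw [min_eq_right hat, mul_one]
  have htop : topSum (rowMultiset k a e) 1 ≤ a k := by
    rw [rowMultiset_eq_blocks]
    simpa using topSum_add_le (A := 0) (by simp)
      (fun r hr => (mem_blocks_Icc_bounds ha le_rfl hkp hr).2) 1
  exact hcol ▸ (hW _ (blocks_mono (Icc_subset_Icc_right hkp)) 1 one_pos).trans htop

lemma colSum_apply_le_of_wide (hW : Wide (rowMultiset p a e)) (ha1 : 0 < a 1) {j k i : ℕ}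
    (hj : 1 ≤ j) (hjk : j ≤ k) (hkp : k ≤ p) (hi : 2 ≤ i) (hik : i ≤ k) :
    ∑ t ∈ Icc 1 (j - 1), a t * e t + a j * ∑ t ∈ Icc j k, e t ≤
      ∑ t ∈ Icc i k, e t * a t + (a j - se e i k) * a (i - 1) := by
  have haj : 0 < a j := ha1.trans_le (ha.monotoneOn ⟨le_rfl, by omega⟩ ⟨hj, by omega⟩ hj)
  have hW' := hW _ (blocks_mono (Icc_subset_Icc_right hkp)) (a j) haj
  rw [← rowMultiset_eq_blocks, colSum_rowMultiset_apply ha hj hjk hkp,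
    rowMultiset_eq_add (by omega : 1 ≤ i) (by omega), add_comm (rowMultiset _ a e)] at hW'
  refine hW'.trans ((topSum_add_le (x := a (i - 1)) ?_ ?_ (a j)).trans_eq ?_)
  · exact fun r hr => (ha.monotoneOn ⟨by omega, by omega⟩ ⟨by omega, by omega⟩
      (by omega)).trans (mem_blocks_Icc_bounds ha (by omega) hkp hr).1
  · exact fun r hr => (mem_blocks_Icc_bounds ha le_rfl (by omega) hr).2
  · rw [sum_blocks, card_blocks, se]

lemma colSum_le_topSum_rowMultiset
    (H1 : ∀ k, 1 ≤ k → k ≤ p → ∑ i ∈ Icc 1 k, e i ≤ a k)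
    (H2 : ∀ j k i, 1 ≤ j → j < k → k ≤ p → 2 ≤ i → i ≤ k →
      se e i k < a j → a j ≤ se e (i - 1) k →
      (∑ t ∈ Icc 1 (j - 1), a t * e t) + a j * ∑ t ∈ Icc j k, e t ≤
        (∑ t ∈ Icc i k, e t * a t) + (a j - se e i k) * a (i - 1))
    {m k : ℕ} (hm : 1 ≤ m) (hmk : m ≤ k) (hkp : k ≤ p) :
    colSum (rowMultiset k a e) (a m) ≤ topSum (rowMultiset k a e) (a m) := by
  by_cases hN : ∑ t ∈ Icc 1 k, e t ≤ a m
  · exact colSum_le_topSum_of_card_le (card_blocks ▸ hN)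
  push Not at hN
  have hi1 := Nat.le_findGreatest (P := fun i => a m ≤ se e i k) (n := k) (by omega) hN.le
  have hi : a m ≤ se e _ k :=
    Nat.findGreatest_spec (P := fun i => a m ≤ se e i k) (n := k) (m := 1) (by omega) hN.le
  have hmax := fun l =>
    Nat.findGreatest_is_greatest (P := fun i => a m ≤ se e i k) (n := k) (k := l)
  have hik := Nat.findGreatest_le (P := fun i => a m ≤ se e i k) k
  generalize Nat.findGreatest (fun i => a m ≤ se e i k) k = i at hi1 hi hmax hik
  -- block `i` contains the `a m`-th longest row of `Y_k`, so the `a m` longest rows are the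
  -- blocks after `i` and part of block `i`
  rcases hik.lt_or_eq with hik | hik
  · have hlt : se e (i + 1) k < a m :=
      not_le.1 (hmax (i + 1) (Nat.lt_succ_self i) hik)
    have hmk' : m < k := hmk.lt_of_ne (by rintro rfl; exact absurd (H1 m hm hkp) (not_le.2 hN))
    have hei : a m - se e (i + 1) k ≤ e i := by
      have := se_eq_add (e := e) hik.le
      omega
    set T := blocks (Icc (i + 1) k) a e + Multiset.replicate (a m - se e (i + 1) k) (a i)
    have hTR : T ≤ rowMultiset k a e := by
      rw [rowMultiset_eq_add (i := i + 1) (by omega) (by omega), Nat.add_sub_cancel, add_comm]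
      exact add_le_add_right (replicate_le_rowMultiset hi1 le_rfl hei) _
    have hTcard : Multiset.card T = a m := by
      rw [Multiset.card_add, card_blocks, Multiset.card_replicate]
      change se e (i + 1) k + _ = a m
      omega
    calc colSum (rowMultiset k a e) (a m)
        = ∑ t ∈ Icc 1 (m - 1), a t * e t + a m * ∑ t ∈ Icc m k, e t :=
          colSum_rowMultiset_apply ha hm hmk hkp
      _ ≤ ∑ t ∈ Icc (i + 1) k, e t * a t + (a m - se e (i + 1) k) * a i := by
          simpa using H2 m k (i + 1) hm hmk' hkp (by omega) (by omega) hlt (by simpa using hi)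
      _ = T.sum := by simp [T, sum_blocks, Multiset.sum_replicate]
      _ ≤ topSum (rowMultiset k a e) (a m) := sum_le_topSum hTR hTcard.le
  · have hek : a m ≤ e k := by
      rw [hik, se, Icc_self, sum_singleton] at hi
      exact hi
    calc colSum (rowMultiset k a e) (a m)
        ≤ Multiset.card (rowMultiset k a e) * a m := colSum_le_card_mul _ _
      _ ≤ a k * a m := Nat.mul_le_mul_right _ (card_blocks ▸ H1 k (by omega) hkp)
      _ = (Multiset.replicate (a m) (a k)).sum := by simp [mul_comm]
      _ ≤ topSum (rowMultiset k a e) (a m) :=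
          sum_le_topSum (replicate_le_rowMultiset (by omega) le_rfl hek) (by simp)

end Diagram

theorem wide_iff_inequalities_general (p : ℕ) (a e : ℕ → ℕ)
    (ha1 : 0 < a 1)
    (hmono : ∀ i, 1 ≤ i → i < p → a i < a (i + 1)) :
    Wide (rowMultiset p a e) ↔
      ((∀ k, 1 ≤ k → k ≤ p → ∑ i ∈ Finset.Icc 1 k, e i ≤ a k) ∧
       (∀ j k i, 1 ≤ j → j < k → k ≤ p → 2 ≤ i → i ≤ k →
          se e i k < a j → a j ≤ se e (i - 1) k →
          (∑ t ∈ Finset.Icc 1 (j - 1), a t * e t) + a j * ∑ t ∈ Finset.Icc j k, e t ≤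
            (∑ t ∈ Finset.Icc i k, e t * a t) + (a j - se e i k) * a (i - 1))) := by
  have ha : StrictMonoOn a (Set.Icc 1 p) :=
    strictMonoOn_of_lt_add_one Set.ordConnected_Icc fun i _ hi hi1 => hmono i hi.1 hi1.2
  refine ⟨fun hW => ⟨fun k _ hkp => sum_le_of_wide ha hW ha1 hkp,
    fun j k i hj hjk hkp hi hik _ _ => colSum_apply_le_of_wide ha hW ha1 hj hjk.le hkp hi hik⟩,
    fun ⟨H1, H2⟩ => wide_of_forall_filter_le fun x hx w _ => ?_⟩
  obtain ⟨k, hk, -, rfl⟩ := mem_blocks.1 hx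
  rw [mem_Icc] at hk
  rw [filter_rowMultiset_le ha hk.1 hk.2]
  refine colSum_le_topSum_of_forall_mem (fun y hy => ?_) w
  obtain ⟨m, hm, -, rfl⟩ := mem_blocks.1 hy
  rw [mem_Icc] at hm
  exact colSum_le_topSum_rowMultiset ha H1 H2 hm.1 hm.2 hk.2

/-- `Y(a;e)` is wide iff the two explicit families of inequalities hold. -/
theorem wide_iff_inequalities (p : ℕ) (hp : 1 ≤ p) (a e : ℕ → ℕ)
    (ha1 : 0 < a 1)
    (hmono : ∀ i, 1 ≤ i → i < p → a i < a (i + 1))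
    (he : ∀ i, 1 ≤ i → i ≤ p → 0 < e i) :
    Wide (rowMultiset p a e) ↔
      ((∀ k, 1 ≤ k → k ≤ p → ∑ i ∈ Finset.Icc 1 k, e i ≤ a k) ∧
       (∀ j k i, 1 ≤ j → j < k → k ≤ p → 2 ≤ i → i ≤ k →
          se e i k < a j → a j ≤ se e (i - 1) k →
          (∑ t ∈ Finset.Icc 1 (j - 1), a t * e t) + a j * ∑ t ∈ Finset.Icc j k, e t ≤
            (∑ t ∈ Finset.Icc i k, e t * a t) + (a j - se e i k) * a (i - 1))) :=
  wide_iff_inequalities_general p a e ha1 hmono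
end

section
/- Let a_1 < a_2 < ... < a_p be positive integers and e_1, ..., e_p be positive integers. If the Young diagram Y(a;e) has an allocation, then Y(a;e) is wide. -/
/-!
Think of an allocation as spreading each row of length `r = a i` as mass over the square `[0, r]²`
with uniform marginals, all rows together putting at most `b j * b k` into cell `(j, k)`. By
inclusion–exclusion a row puts mass at least `min r x + min r y - r` into `[0, x] × [0, y]`, so
for every subdiagram `S` and breakpoints `x = a j`, `y = a m`
  `∑ r ∈ S, (min r x + min r y) ≤ x * y + ∑ r ∈ S, r`.
Both sides are affine in `x` between consecutive breakpoints, so this holds for every `x`.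
If `y` is the `(w+1)`-st largest row of `S`, the right-hand side at `x = w` is exactly
`topSum S w + ∑ r ∈ S, min r y`, while `colSum S w = ∑ r ∈ S, min r w`.
-/

namespace Multiset

theorem sum_map_min_eq_colSum (S : Multiset ℕ) (w : ℕ) :
    (S.map (min · w)).sum = colSum S w := by
  induction S using Multiset.induction with
  | empty => simp [colSum]
  | cons x S ih =>
    have hfilter (c : ℕ) : ((x ::ₘ S).filter (c ≤ ·)).card
        = (if c ≤ x then 1 else 0) + (S.filter (c ≤ ·)).card := by
      split_ifs <;> simp [*, add_comm]
    have hcount : ∑ c ∈ Finset.Icc 1 w, (if c ≤ x then 1 else 0) = min x w := by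
      have hfilter_le : (Finset.Icc 1 w).filter (· ≤ x) = Finset.Icc 1 (min x w) := by
        ext
        simp only [Finset.mem_filter, Finset.mem_Icc, le_min_iff]
        omega
      rw [Finset.sum_boole, Nat.cast_id, hfilter_le, Nat.card_Icc, Nat.add_sub_cancel]
    simp only [colSum, Multiset.map_cons, Multiset.sum_cons, ih, hfilter,
      Finset.sum_add_distrib, hcount]

theorem topSum_of_card_le {S : Multiset ℕ} {w : ℕ} (hw : card S ≤ w) :
    topSum S w = S.sum := by
  rw [topSum, List.take_of_length_le (by simpa using hw), List.sum_reverse, ← sum_coe, sort_eq]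

theorem exists_topSum_add_sum_map_min_eq {S : Multiset ℕ} {w : ℕ} (hw : w < card S) :
    ∃ y ∈ S, topSum S w + (S.map (min · y)).sum = w * y + S.sum := by
  set L := (S.sort (· ≤ ·)).reverse with hL
  have hLS : (L : Multiset ℕ) = S := by rw [hL, coe_reverse, sort_eq]
  have hwL : w < L.length := by simpa [hL] using hw
  have hsorted : L.Pairwise (· ≥ ·) := List.pairwise_reverse.mpr (pairwise_sort S _)
  set y := L[w]
  have hsplit : L = L.take w ++ y :: L.drop (w + 1) := by
    rw [← List.drop_eq_getElem_cons hwL, List.take_append_drop]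
  rw [hsplit, List.pairwise_append, List.pairwise_cons] at hsorted
  obtain ⟨-, ⟨hy_ge_rest, -⟩, htop_ge⟩ := hsorted
  refine ⟨y, hLS ▸ List.getElem_mem hwL, ?_⟩
  have htake : ((L.take w).map (min · y)).sum = w * y := by
    rw [List.map_congr_left fun r hr => min_eq_right (htop_ge r hr y List.mem_cons_self),
      List.map_const', List.sum_replicate, List.length_take_of_le hwL.le, smul_eq_mul]
  have hdrop : ((L.drop (w + 1)).map (min · y)).sum = (L.drop (w + 1)).sum := by
    rw [List.map_congr_left fun r hr => min_eq_left (hy_ge_rest r hr), List.map_id']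
  have hmap : (S.map (min · y)).sum = (L.map (min · y)).sum := by rw [← hLS, map_coe, sum_coe]
  have hsum : S.sum = L.sum := by rw [← hLS, sum_coe]
  rw [topSum, ← hL, hmap, hsum, hsplit]
  simp only [List.map_append, List.map_cons, List.sum_append, List.sum_cons, htake, hdrop,
    min_self, List.take_left' (List.length_take_of_le hwL.le)]
  ring

theorem sum_map_min_add_le_of_forall_le_or_le (S : Multiset ℕ) {u x v y c d : ℕ}
    (hux : u ≤ x) (hxv : x ≤ v) (hgap : ∀ r ∈ S, r ≤ u ∨ v ≤ r)
    (hu : (S.map (min · u)).sum + c ≤ u * y + d)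
    (hv : (S.map (min · v)).sum + c ≤ v * y + d) :
    (S.map (min · x)).sum + c ≤ x * y + d := by
  obtain ⟨s, rfl⟩ := Nat.exists_eq_add_of_le hux
  obtain ⟨t, rfl⟩ := Nat.exists_eq_add_of_le hxv
  rcases Nat.eq_zero_or_pos s with rfl | hs
  · simpa using hu
  -- on `[u, v]` every `min r ·` is affine, so the left side is too
  have haffine : (s + t) * (S.map (min · (u + s))).sum
      = t * (S.map (min · u)).sum + s * (S.map (min · (u + s + t))).sum := by
    simp only [← sum_map_mul_left, ← sum_map_add]
    refine congrArg sum (map_congr rfl fun r hr => ?_)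
    rcases hgap r hr with h | h
    · rw [min_eq_left h, min_eq_left (by omega : r ≤ u + s),
        min_eq_left (by omega : r ≤ u + s + t)]
      ring
    · rw [min_eq_right h, min_eq_right (by omega : u + s ≤ r), min_eq_right (by omega : u ≤ r)]
      ring
  refine Nat.le_of_mul_le_mul_left ?_ (Nat.add_pos_left hs t)
  nlinarith

theorem sum_map_min_add_le_of_forall_breakpoint {S : Multiset ℕ} {p : ℕ} {a : ℕ → ℕ}
    (ha : MonotoneOn a (Set.Iic p)) (ha0 : a 0 = 0) (hS : ∀ r ∈ S, ∃ i ≤ p, a i = r)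
    {y c d : ℕ} (hbp : ∀ j ≤ p, (S.map (min · (a j))).sum + c ≤ a j * y + d) (x : ℕ) :
    (S.map (min · x)).sum + c ≤ x * y + d := by
  have hle_breakpoint : ∀ j ≤ p, ∀ x ≤ a j, (S.map (min · x)).sum + c ≤ x * y + d := by
    intro j
    induction j with
    | zero =>
      intro _ x hx
      obtain rfl : x = 0 := by omega
      simpa only [ha0] using hbp 0 (Nat.zero_le p)
    | succ j ih =>
      intro hj x hx
      rcases le_or_gt x (a j) with hxj | hxj
      · exact ih (by omega) x hxj
      refine sum_map_min_add_le_of_forall_le_or_le S hxj.le hx (fun r hr => ?_)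
        (hbp j (by omega)) (hbp (j + 1) hj)
      obtain ⟨i, hi, rfl⟩ := hS r hr
      rcases le_or_gt i j with hij | hij
      · exact .inl (ha (Set.mem_Iic.mpr hi) (Set.mem_Iic.mpr (by omega)) hij)
      · exact .inr (ha (Set.mem_Iic.mpr hj) (Set.mem_Iic.mpr hi) hij)
  rcases le_or_gt x (a p) with hx | hx
  · exact hle_breakpoint p le_rfl x hx
  have hmin : S.map (min · x) = S.map (min · (a p)) := map_congr rfl fun r hr => by
    obtain ⟨i, hi, rfl⟩ := hS r hr
    have := ha (Set.mem_Iic.mpr hi) (Set.mem_Iic.mpr le_rfl) hi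
    rw [min_eq_left (by omega), min_eq_left this]
  calc (S.map (min · x)).sum + c ≤ a p * y + d := hmin ▸ hbp p le_rfl
    _ ≤ x * y + d := by gcongr

end Multiset

theorem Finset.sum_sum_add_sum_sum_le {ι κ M : Type*} [AddCommMonoid M] [PartialOrder M]
    [IsOrderedAddMonoid M] [CanonicallyOrderedAdd M] [DecidableEq ι]
    {s s' : Finset ι} {t t' : Finset κ} (hs : s' ⊆ s) (ht : t' ⊆ t) (z : ι → κ → M) :
    ∑ i ∈ s', ∑ k ∈ t, z i k + ∑ i ∈ s, ∑ k ∈ t', z i k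
      ≤ ∑ i ∈ s', ∑ k ∈ t', z i k + ∑ i ∈ s, ∑ k ∈ t, z i k := by
  rw [← Finset.sum_sdiff hs (f := fun i => ∑ k ∈ t', z i k),
    ← Finset.sum_sdiff hs (f := fun i => ∑ k ∈ t, z i k)]
  have hcompl : ∑ i ∈ s \ s', ∑ k ∈ t', z i k ≤ ∑ i ∈ s \ s', ∑ k ∈ t, z i k :=
    Finset.sum_le_sum fun i _ => Finset.sum_le_sum_of_subset ht
  calc _ = ∑ i ∈ s', ∑ k ∈ t', z i k
        + (∑ i ∈ s \ s', ∑ k ∈ t', z i k + ∑ i ∈ s', ∑ k ∈ t, z i k) := by abel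
    _ ≤ _ := by gcongr

theorem Finset.sum_Icc_tsub_eq {a : ℕ → ℕ} {t : ℕ} (ha : MonotoneOn a (Set.Iic t)) :
    ∑ k ∈ Finset.Icc 1 t, (a k - a (k - 1)) = a t - a 0 := by
  induction t with
  | zero => simp
  | succ t ih =>
    have hmem {k : ℕ} (hk : k ≤ t + 1) : k ∈ Set.Iic (t + 1) := hk
    have h0t := ha (hmem (Nat.zero_le _)) (hmem t.le_succ) (Nat.zero_le t)
    have htt := ha (hmem t.le_succ) (hmem le_rfl) t.le_succ
    rw [Finset.sum_Icc_succ_top (by omega), ih (ha.mono (Set.Iic_subset_Iic.mpr t.le_succ)),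
      Nat.add_sub_cancel]
    omega

theorem sum_map_rowMultiset (p : ℕ) (a e g : ℕ → ℕ) :
    ((rowMultiset p a e).map g).sum = ∑ i ∈ Finset.Icc 1 p, e i * g (a i) := by
  simp [rowMultiset, ← Multiset.coe_mapAddMonoidHom, map_sum, Multiset.sum_sum]

theorem exists_eq_of_mem_rowMultiset {p : ℕ} {a e : ℕ → ℕ} {r : ℕ}
    (hr : r ∈ rowMultiset p a e) : ∃ i ∈ Finset.Icc 1 p, a i = r := by
  obtain ⟨i, hi, hr⟩ := Multiset.mem_sum.mp hr
  exact ⟨i, hi, (Multiset.eq_of_mem_replicate hr).symm⟩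

structure IsAllocation (p : ℕ) (a e : ℕ → ℕ) (z : ℕ → ℕ → ℕ → ℕ) : Prop where
  row_sum : ∀ i j, 1 ≤ j → j ≤ i → i ≤ p →
    ∑ k ∈ Finset.Icc 1 i, z i j k = e i * (a j - a (j - 1))
  col_sum : ∀ i k, 1 ≤ k → k ≤ i → i ≤ p →
    ∑ j ∈ Finset.Icc 1 i, z i j k = e i * (a k - a (k - 1))
  capacity : ∀ j k, 1 ≤ j → j ≤ p → 1 ≤ k → k ≤ p →
    ∑ i ∈ Finset.Icc (max j k) p, z i j k ≤ (a j - a (j - 1)) * (a k - a (k - 1))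

namespace IsAllocation

open Finset

variable {p : ℕ} {a e : ℕ → ℕ} {z : ℕ → ℕ → ℕ → ℕ}

theorem transpose (hz : IsAllocation p a e z) : IsAllocation p a e (fun i j k => z i k j) where
  row_sum := hz.col_sum
  col_sum := hz.row_sum
  capacity j k hj hjp hk hkp := by
    rw [max_comm, mul_comm]
    exact hz.capacity k j hk hkp hj hjp

variable (hz : IsAllocation p a e z) (ha : MonotoneOn a (Set.Iic p)) (ha0 : a 0 = 0)
include hz ha ha0

theorem sum_row_prefix {i t : ℕ} (hi : i ≤ p) (ht : t ≤ i) :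
    ∑ j ∈ Icc 1 t, ∑ k ∈ Icc 1 i, z i j k = e i * a t := by
  rw [sum_congr rfl fun j hj => hz.row_sum i j (mem_Icc.1 hj).1 ((mem_Icc.1 hj).2.trans ht) hi,
    ← mul_sum, sum_Icc_tsub_eq (ha.mono (Set.Iic_subset_Iic.mpr (ht.trans hi))), ha0,
    Nat.sub_zero]

theorem sum_col_prefix {i t : ℕ} (hi : i ≤ p) (ht : t ≤ i) :
    ∑ j ∈ Icc 1 i, ∑ k ∈ Icc 1 t, z i j k = e i * a t := by
  rw [sum_comm]
  exact hz.transpose.sum_row_prefix ha ha0 hi ht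

theorem mul_add_mul_le {i : ℕ} (hi : i ≤ p) (j m : ℕ) :
    e i * a (min i j) + e i * a (min i m)
      ≤ ∑ j' ∈ Icc 1 (min i j), ∑ k ∈ Icc 1 (min i m), z i j' k + e i * a i := by
  rw [← hz.sum_row_prefix ha ha0 hi (min_le_left i j),
    ← hz.sum_col_prefix ha ha0 hi (min_le_left i m), ← hz.sum_row_prefix ha ha0 hi le_rfl]
  exact sum_sum_add_sum_sum_le (Icc_subset_Icc_right (min_le_left i j))
    (Icc_subset_Icc_right (min_le_left i m)) (z i)

theorem sum_rect_le {j m : ℕ} (hj : j ≤ p) (hm : m ≤ p) :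
    ∑ i ∈ Icc 1 p, ∑ j' ∈ Icc 1 (min i j), ∑ k ∈ Icc 1 (min i m), z i j' k
      ≤ a j * a m := by
  calc _ = ∑ i ∈ Icc 1 p, ∑ x ∈ Icc 1 (min i j) ×ˢ Icc 1 (min i m), z i x.1 x.2 := by
        simp_rw [sum_product]
    -- block `i` reaches cell `(j', k')` exactly when `max j' k' ≤ i`
    _ = ∑ x ∈ Icc 1 j ×ˢ Icc 1 m, ∑ i ∈ Icc (max x.1 x.2) p, z i x.1 x.2 :=
        sum_comm' fun i x => by simp only [mem_Icc, mem_product, max_le_iff, le_min_iff]; omega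
    _ ≤ ∑ x ∈ Icc 1 j ×ˢ Icc 1 m, (a x.1 - a (x.1 - 1)) * (a x.2 - a (x.2 - 1)) :=
        sum_le_sum fun x hx => by
          simp only [mem_product, mem_Icc] at hx
          exact hz.capacity _ _ hx.1.1 (hx.1.2.trans hj) hx.2.1 (hx.2.2.trans hm)
    _ = a j * a m := by
        rw [sum_product' _ _ fun j' k => (a j' - a (j' - 1)) * (a k - a (k - 1)), ← sum_mul_sum,
          sum_Icc_tsub_eq (ha.mono (Set.Iic_subset_Iic.mpr hj)),
          sum_Icc_tsub_eq (ha.mono (Set.Iic_subset_Iic.mpr hm)), ha0, Nat.sub_zero, Nat.sub_zero]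

theorem sum_mul_min_add_min_tsub_le {j m : ℕ} (hj : j ≤ p) (hm : m ≤ p) :
    ∑ i ∈ Icc 1 p, e i * (min (a i) (a j) + min (a i) (a m) - a i) ≤ a j * a m := by
  refine le_trans (sum_le_sum fun i hi => ?_) (hz.sum_rect_le ha ha0 hj hm)
  have hip : i ≤ p := (mem_Icc.1 hi).2
  rw [← ha.map_min hip hj, ← ha.map_min hip hm, Nat.mul_sub, mul_add]
  have := hz.mul_add_mul_le ha ha0 hip j m
  omega

end IsAllocation

theorem HasAllocation.sum_map_min_add_sum_map_min_le {p : ℕ} {a e : ℕ → ℕ}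
    (h : HasAllocation p a e) (ha : MonotoneOn a (Set.Iic p)) (ha0 : a 0 = 0)
    {S : Multiset ℕ} (hS : S ≤ rowMultiset p a e) {j m : ℕ} (hj : j ≤ p) (hm : m ≤ p) :
    (S.map (min · (a j))).sum + (S.map (min · (a m))).sum ≤ a j * a m + S.sum := by
  obtain ⟨z, hrow, hcol, hcap⟩ := h
  obtain ⟨T, hT⟩ := Multiset.le_iff_exists_add.1 hS
  set ψ : ℕ → ℕ := fun r => min r (a j) + min r (a m) - r
  calc _ = (S.map fun r => min r (a j) + min r (a m)).sum := Multiset.sum_map_add.symm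
    _ ≤ (S.map fun r => ψ r + r).sum :=
        Multiset.sum_map_le_sum_map _ _ fun r _ => le_tsub_add
    _ = (S.map ψ).sum + S.sum := by rw [Multiset.sum_map_add, Multiset.map_id']
    _ ≤ ((rowMultiset p a e).map ψ).sum + S.sum := by
        rw [hT, Multiset.map_add, Multiset.sum_add]
        exact Nat.add_le_add_right (Nat.le_add_right _ _) _
    _ = ∑ i ∈ Finset.Icc 1 p, e i * ψ (a i) + S.sum := by rw [sum_map_rowMultiset]
    _ ≤ a j * a m + S.sum := Nat.add_le_add_right
        (IsAllocation.sum_mul_min_add_min_tsub_le ⟨hrow, hcol, hcap⟩ ha ha0 hj hm) _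

theorem allocation_implies_wide_general (p : ℕ) (a e : ℕ → ℕ)
    (ha0 : a 0 = 0)
    (hmono : ∀ i, 1 ≤ i → i < p → a i < a (i + 1))
    (halloc : HasAllocation p a e) :
    Wide (rowMultiset p a e) := by
  have ha : MonotoneOn a (Set.Iic p) := by
    refine monotoneOn_of_le_succ Set.ordConnected_Iic fun i _ _ hi => ?_
    rw [Order.succ_eq_add_one] at hi ⊢
    rcases Nat.eq_zero_or_pos i with rfl | hi0
    · rw [ha0]
      exact Nat.zero_le _
    · exact (hmono i hi0 hi).le
  have hS_breakpoints {S : Multiset ℕ} (hS : S ≤ rowMultiset p a e) :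
      ∀ r ∈ S, ∃ i ≤ p, a i = r := fun r hr =>
    let ⟨i, hi, hir⟩ := exists_eq_of_mem_rowMultiset (Multiset.mem_of_le hS hr)
    ⟨i, (Finset.mem_Icc.1 hi).2, hir⟩
  intro S hS w _
  rw [← S.sum_map_min_eq_colSum]
  rcases le_or_gt (Multiset.card S) w with hw | hw
  · rw [Multiset.topSum_of_card_le hw]
    exact (Multiset.sum_map_le_sum_map _ _ fun r _ => min_le_left r w).trans_eq (by simp)
  obtain ⟨y, hyS, hy⟩ := Multiset.exists_topSum_add_sum_map_min_eq hw
  obtain ⟨m, hm, rfl⟩ := hS_breakpoints hS y hyS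
  have := Multiset.sum_map_min_add_le_of_forall_breakpoint ha ha0 (hS_breakpoints hS)
    (fun j hj => halloc.sum_map_min_add_sum_map_min_le ha ha0 hS hj hm) w
  omega

/-- if `Y(a;e)` has an allocation, then it is wide. -/
theorem allocation_implies_wide (p : ℕ) (hp : 1 ≤ p) (a e : ℕ → ℕ)
    (ha0 : a 0 = 0) (ha1 : 0 < a 1)
    (hmono : ∀ i, 1 ≤ i → i < p → a i < a (i + 1))
    (he : ∀ i, 1 ≤ i → i ≤ p → 0 < e i)
    (halloc : HasAllocation p a e) :
    Wide (rowMultiset p a e) :=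
  allocation_implies_wide_general p a e ha0 hmono halloc
end
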